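/- arXiv:2008.02242 — 2 statements merged into one kernel-verified Lean document; each statement's English description precedes it below -/
import Mathlib

section
/- Let (S,d) be a nonempty compact geodesic metric space homeomorphic to the 2-sphere S², and let ν be a finite Borel measure on S with ν(S) > 0. Suppose δ > 0 is such that ν(B(z,δ)) ≤ ν(S)/2 for every z ∈ S. Then there exists r₀ > 0 such that for every r ∈ (0,r₀) and every z ∈ S there is exactly one connected component U of S ∖ B(z,r) of diameter at least δ/4, and this component satisfies ν(U) ≥ ν(S)/2. -/
/-- A unit-speed geodesic `η : [0,T] → X`: `dist (η s) (η t) = |s - t|` for `s, t ∈ [0,T]`. -/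
def IsUnitSpeedGeodesic {X : Type*} [MetricSpace X] (η : ℝ → X) (T : ℝ) : Prop :=
  ∀ s ∈ Set.Icc (0 : ℝ) T, ∀ t ∈ Set.Icc (0 : ℝ) T, dist (η s) (η t) = |s - t|

/-!
A sphere minus a point is path-connected. If `a ≠ b, c`, a path from `b` to `c` avoiding `a`
misses a whole ball around `a`, and short geodesics attach points `x, y` near `b, c` to it; so for
`(r, z, x, y)` near `(0, a, b, c)` the points `x, y` are joined outside `B(z, r)`. Compactness of
`{(z, x, y) | d(z,x), d(z,y) ≥ δ/16}` makes `r` uniform: for small `r` all points at distance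
`≥ δ/16` from `z` lie in one component `U` of `S ∖ B(z, r)`. Hence `Uᶜ ⊆ B(z, δ/16)`, which gives
`ν(U) ≥ ν(S)/2` and forces every component of diameter `≥ δ/4` to be `U`; and `U` has diameter
`≥ δ/4` because `B(z, δ)` does not exhaust `S`, so `U` reaches distance `δ` from `z`.
-/

open Set Metric Filter Topology MeasureTheory

theorem isPathConnected_compl_singleton_sphere {E : Type*} [NormedAddCommGroup E]
    [InnerProductSpace ℝ E] {n : ℕ} [Fact (Module.finrank ℝ E = n + 1)] (v : sphere (0 : E) 1) :
    IsPathConnected ({v}ᶜ : Set (sphere (0 : E) 1)) := by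
  rw [← stereographic'_source (n := n) v, ← (stereographic' n v).symm_image_target_eq_source,
    stereographic'_target]
  exact isPathConnected_univ.image' ((stereographic' n v).continuousOn_symm.mono
    (stereographic'_target v).ge)

theorem JoinedIn.mem_connectedComponentIn {X : Type*} [TopologicalSpace X] {F : Set X} {x y : X}
    (h : JoinedIn F x y) : y ∈ connectedComponentIn F x := by
  obtain ⟨γ, hγ⟩ := h
  exact (isPreconnected_range γ.continuous).subset_connectedComponentIn ⟨0, γ.source⟩
    (range_subset_iff.2 hγ) ⟨1, γ.target⟩

theorem JoinedIn.exists_compl_ball {X : Type*} [MetricSpace X] {a b c : X}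
    (h : JoinedIn {a}ᶜ b c) : ∃ ε > 0, JoinedIn (ball a ε)ᶜ b c := by
  obtain ⟨γ, hγ⟩ := h
  obtain ⟨ε, hε, hball⟩ := Metric.isOpen_iff.1
    (isCompact_range γ.continuous).isClosed.isOpen_compl a fun ⟨t, ht⟩ => hγ t ht
  exact ⟨ε, hε, γ, fun t ht => hball ht ⟨t, rfl⟩⟩

theorem exists_notMem_of_measure_le_half {α : Type*} [MeasurableSpace α] {μ : Measure α}
    [IsFiniteMeasure μ] (hμ : μ univ ≠ 0) {s : Set α} (hs : μ s ≤ μ univ / 2) : ∃ x, x ∉ s := by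
  by_contra! h
  rw [eq_univ_of_forall h] at hs
  exact (ENNReal.half_lt_self hμ (measure_ne_top μ _)).not_ge hs

theorem half_measure_univ_le_of_measure_compl_le {α : Type*} [MeasurableSpace α]
    {μ : Measure α} [IsFiniteMeasure μ] {s : Set α} (hs : μ sᶜ ≤ μ univ / 2) :
    μ univ / 2 ≤ μ s :=
  calc μ univ / 2 = μ univ - μ univ / 2 := (ENNReal.sub_half (measure_ne_top μ _)).symm
    _ ≤ μ univ - μ sᶜ := tsub_le_tsub_left hs _
    _ ≤ μ s := tsub_le_iff_right.2 (measure_univ_le_add_compl s)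

section Geodesic

variable {S : Type*} [MetricSpace S]

theorem IsUnitSpeedGeodesic.dist_zero {η : ℝ → S} {T t : ℝ} (h : IsUnitSpeedGeodesic η T)
    (ht : t ∈ Icc 0 T) : dist (η 0) (η t) = t := by
  rw [h 0 ⟨le_rfl, ht.1.trans ht.2⟩ t ht, zero_sub, abs_neg, abs_of_nonneg ht.1]

theorem IsUnitSpeedGeodesic.continuousOn {η : ℝ → S} {T : ℝ} (h : IsUnitSpeedGeodesic η T) :
    ContinuousOn η (Icc 0 T) :=
  (LipschitzOnWith.of_dist_le_mul (K := 1) fun s hs t ht => by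
    simp [h s hs t ht, Real.dist_eq]).continuousOn

theorem IsUnitSpeedGeodesic.joinedIn_closedBall {η : ℝ → S} {x y : S}
    (h : IsUnitSpeedGeodesic η (dist x y)) (h₀ : η 0 = x) (h₁ : η (dist x y) = y) :
    JoinedIn (closedBall x (dist x y)) x y := by
  have hmaps : MapsTo (· * dist x y) unitInterval (Icc 0 (dist x y)) := fun t ht =>
    ⟨mul_nonneg ht.1 dist_nonneg, mul_le_of_le_one_left dist_nonneg ht.2⟩
  refine JoinedIn.ofLine (h.continuousOn.comp (by fun_prop) hmaps) (by simp [h₀])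
    (by simp [h₁]) ?_
  rintro _ ⟨t, ht, rfl⟩
  have hdist := h.dist_zero (hmaps ht)
  rw [h₀] at hdist
  exact mem_closedBall'.2 (hdist.trans_le (hmaps ht).2)

variable (hgeo : ∀ x y : S, ∃ η : ℝ → S,
  IsUnitSpeedGeodesic η (dist x y) ∧ η 0 = x ∧ η (dist x y) = y)
include hgeo

theorem joinedIn_compl_ball_of_add_le {z x y : S} {r : ℝ} (h : dist x y + r ≤ dist x z) :
    JoinedIn (ball z r)ᶜ x y := by
  obtain ⟨η, hη, h₀, h₁⟩ := hgeo x y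
  exact (hη.joinedIn_closedBall h₀ h₁).mono (closedBall_disjoint_ball h).subset_compl_right

theorem eventually_joinedIn_compl_ball (hpc : ∀ a : S, IsPathConnected ({a}ᶜ : Set S))
    {a b c : S} (hab : a ≠ b) (hac : a ≠ c) :
    ∀ᶠ q : ℝ × S × S × S in 𝓝 (0, a, b, c), JoinedIn (ball q.2.1 q.1)ᶜ q.2.2.1 q.2.2.2 := by
  obtain ⟨ε, hε, hbc⟩ := ((hpc a).joinedIn b hab.symm c hac.symm).exists_compl_ball
  have hx : ∀ᶠ q : ℝ × S × S × S in 𝓝 (0, a, b, c),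
      dist q.2.2.1 b + q.1 < dist q.2.2.1 q.2.1 :=
    ContinuousAt.eventually_lt (by fun_prop) (by fun_prop) (by simpa using hab.symm)
  have hy : ∀ᶠ q : ℝ × S × S × S in 𝓝 (0, a, b, c),
      dist q.2.2.2 c + q.1 < dist q.2.2.2 q.2.1 :=
    ContinuousAt.eventually_lt (by fun_prop) (by fun_prop) (by simpa using hac.symm)
  have hz : ∀ᶠ q : ℝ × S × S × S in 𝓝 (0, a, b, c), q.1 + dist q.2.1 a < ε :=
    ContinuousAt.eventually_lt (by fun_prop) (by fun_prop) (by simpa using hε)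
  filter_upwards [hx, hy, hz] with ⟨r, z, x, y⟩ hx hy hz
  exact ((joinedIn_compl_ball_of_add_le hgeo hx.le).trans
    (hbc.mono (compl_subset_compl.2 (ball_subset_ball' hz.le)))).trans
    (joinedIn_compl_ball_of_add_le hgeo hy.le).symm

theorem eventually_forall_joinedIn_compl_ball [CompactSpace S]
    (hpc : ∀ a : S, IsPathConnected ({a}ᶜ : Set S)) {ε : ℝ} (hε : 0 < ε) :
    ∀ᶠ r in 𝓝 (0 : ℝ), ∀ z x y : S, ε ≤ dist z x → ε ≤ dist z y → JoinedIn (ball z r)ᶜ x y := by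
  have hK : IsCompact ({q | ε ≤ dist q.1 q.2.1} ∩ {q | ε ≤ dist q.1 q.2.2} : Set (S × S × S)) :=
    ((isClosed_le continuous_const (by fun_prop)).inter
      (isClosed_le continuous_const (by fun_prop))).isCompact
  filter_upwards [hK.eventually_forall_of_forall_eventually
    (P := fun r q => JoinedIn (ball q.1 r)ᶜ q.2.1 q.2.2) fun q hq =>
    eventually_joinedIn_compl_ball hgeo hpc (dist_pos.1 (hε.trans_le hq.1))
      (dist_pos.1 (hε.trans_le hq.2))] with r hr z x y hx hy
  exact hr (z, x, y) ⟨hx, hy⟩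

end Geodesic

section Components

variable {S : Type*} [MetricSpace S] {z x : S} {r ε : ℝ}
  (hjoin : ∀ x y : S, ε ≤ dist z x → ε ≤ dist z y → JoinedIn (ball z r)ᶜ x y)
include hjoin

theorem compl_connectedComponentIn_subset_ball (hx : ε ≤ dist z x) :
    (connectedComponentIn (ball z r)ᶜ x)ᶜ ⊆ ball z ε := fun w hw => by
  by_contra hwz
  exact hw (hjoin x w hx (not_lt.1 (mem_ball'.not.1 hwz))).mem_connectedComponentIn

theorem connectedComponentIn_eq_of_two_mul_lt_diam (hε : 0 ≤ ε) (hx : ε ≤ dist z x) {v : S}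
    (hv : 2 * ε < diam (connectedComponentIn (ball z r)ᶜ v)) :
    connectedComponentIn (ball z r)ᶜ v = connectedComponentIn (ball z r)ᶜ x := by
  obtain ⟨w, hwv, hwz⟩ := not_subset.1 fun hsub : connectedComponentIn (ball z r)ᶜ v ⊆ ball z ε =>
    hv.not_ge ((diam_mono (hsub.trans ball_subset_closedBall) isBounded_closedBall).trans
      (diam_closedBall hε))
  have hwx : w ∈ connectedComponentIn (ball z r)ᶜ x :=
    not_not.1 fun hw => hwz (compl_connectedComponentIn_subset_ball hjoin hx hw)
  rw [connectedComponentIn_eq hwv, connectedComponentIn_eq hwx]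

/-- The point at distance `ε` from `z` on a geodesic from `z` to `x` lies in the component
of `x`. -/
theorem dist_sub_le_diam_connectedComponentIn [BoundedSpace S]
    (hgeo : ∀ x y : S, ∃ η : ℝ → S,
      IsUnitSpeedGeodesic η (dist x y) ∧ η 0 = x ∧ η (dist x y) = y)
    (hε : 0 ≤ ε) (hx : ε ≤ dist z x) :
    dist z x - ε ≤ diam (connectedComponentIn (ball z r)ᶜ x) := by
  obtain ⟨η, hη, h₀, h₁⟩ := hgeo z x
  have hzw : dist z (η ε) = ε := h₀ ▸ hη.dist_zero ⟨hε, hx⟩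
  have hwx : dist (η ε) x = dist z x - ε := by
    have h := hη ε ⟨hε, hx⟩ _ ⟨hε.trans hx, le_rfl⟩
    rwa [h₁, abs_sub_comm, abs_of_nonneg (sub_nonneg.2 hx)] at h
  have hw : η ε ∈ connectedComponentIn (ball z r)ᶜ x :=
    not_not.1 fun hw => (mem_ball'.1 (compl_connectedComponentIn_subset_ball hjoin hx hw)).ne hzw
  exact hwx ▸ dist_le_diam_of_mem (Bornology.IsBounded.all _) hw
    (hjoin x x hx hx).mem_connectedComponentIn

end Components

theorem unique_big_component_large_measure_general {S : Type*} [MetricSpace S]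
    [CompactSpace S] [MeasurableSpace S]
    (hgeo : ∀ x y : S, ∃ η : ℝ → S,
      IsUnitSpeedGeodesic η (dist x y) ∧ η 0 = x ∧ η (dist x y) = y)
    (hsphere : Nonempty (S ≃ₜ Metric.sphere (0 : EuclideanSpace ℝ (Fin 3)) 1))
    (ν : MeasureTheory.Measure S) [MeasureTheory.IsFiniteMeasure ν]
    (hν : 0 < ν Set.univ)
    (δ : ℝ) (hδ : 0 < δ)
    (hball : ∀ z : S, ν (Metric.ball z δ) ≤ ν Set.univ / 2) :
    ∃ r₀ > (0 : ℝ), ∀ r ∈ Set.Ioo (0 : ℝ) r₀, ∀ z : S,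
      ∃ U : Set S,
        ((∃ u ∈ (Metric.ball z r)ᶜ, U = connectedComponentIn (Metric.ball z r)ᶜ u) ∧
          δ / 4 ≤ Metric.diam U) ∧
        ν Set.univ / 2 ≤ ν U ∧
        ∀ V : Set S,
          ((∃ v ∈ (Metric.ball z r)ᶜ, V = connectedComponentIn (Metric.ball z r)ᶜ v) ∧
            δ / 4 ≤ Metric.diam V) → V = U := by
  obtain ⟨e⟩ := hsphere
  have : Fact (Module.finrank ℝ (EuclideanSpace ℝ (Fin 3)) = 2 + 1) := ⟨by simp⟩
  have hpc (a : S) : IsPathConnected ({a}ᶜ : Set S) := by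
    rw [show ({a}ᶜ : Set S) = e ⁻¹' {e a}ᶜ by ext; simp, e.isPathConnected_preimage]
    exact isPathConnected_compl_singleton_sphere (n := 2) (e a)
  obtain ⟨r₀, hr₀, hjoin⟩ := Metric.eventually_nhds_iff.1
    (eventually_forall_joinedIn_compl_ball hgeo hpc (ε := δ / 16) (by positivity))
  refine ⟨r₀, hr₀, fun r hr z => ?_⟩
  have hjoin := hjoin (show dist r 0 < r₀ by simpa [abs_of_pos hr.1] using hr.2) z
  obtain ⟨x, hxδ⟩ := exists_notMem_of_measure_le_half hν.ne' (hball z)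
  replace hxδ : δ ≤ dist z x := not_lt.1 (mem_ball'.not.1 hxδ)
  have hx : δ / 16 ≤ dist z x := by linarith
  refine ⟨connectedComponentIn (ball z r)ᶜ x,
    ⟨⟨x, (hjoin x x hx hx).source_mem, rfl⟩, ?_⟩, ?_, ?_⟩
  · linarith [dist_sub_le_diam_connectedComponentIn hjoin hgeo (by positivity) hx]
  · exact half_measure_univ_le_of_measure_compl_le ((measure_mono
      ((compl_connectedComponentIn_subset_ball hjoin hx).trans
        (ball_subset_ball (by linarith)))).trans (hball z))
  · rintro _ ⟨⟨v, -, rfl⟩, hv⟩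
    exact connectedComponentIn_eq_of_two_mul_lt_diam hjoin (by positivity) hx (by linarith)

/-- In a nonempty compact geodesic metric space homeomorphic to the 2-sphere, carrying a finite
Borel measure `ν` with `ν(S) > 0`, if `δ > 0` is such that `ν(B(z,δ)) ≤ ν(S)/2` for every `z`,
then there is `r₀ > 0` so that for each `r ∈ (0,r₀)` and each `z`, exactly one connected
component `U` of `S \ B(z,r)` has diameter at least `δ/4`, and it satisfies `ν(U) ≥ ν(S)/2`. -/
theorem unique_big_component_large_measure {S : Type*} [MetricSpace S] [Nonempty S]
    [CompactSpace S] [MeasurableSpace S] [BorelSpace S]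
    (hgeo : ∀ x y : S, ∃ η : ℝ → S,
      IsUnitSpeedGeodesic η (dist x y) ∧ η 0 = x ∧ η (dist x y) = y)
    (hsphere : Nonempty (S ≃ₜ Metric.sphere (0 : EuclideanSpace ℝ (Fin 3)) 1))
    (ν : MeasureTheory.Measure S) [MeasureTheory.IsFiniteMeasure ν]
    (hν : 0 < ν Set.univ)
    (δ : ℝ) (hδ : 0 < δ)
    (hball : ∀ z : S, ν (Metric.ball z δ) ≤ ν Set.univ / 2) :
    ∃ r₀ > (0 : ℝ), ∀ r ∈ Set.Ioo (0 : ℝ) r₀, ∀ z : S,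
      ∃ U : Set S,
        ((∃ u ∈ (Metric.ball z r)ᶜ, U = connectedComponentIn (Metric.ball z r)ᶜ u) ∧
          δ / 4 ≤ Metric.diam U) ∧
        ν Set.univ / 2 ≤ ν U ∧
        ∀ V : Set S,
          ((∃ v ∈ (Metric.ball z r)ᶜ, V = connectedComponentIn (Metric.ball z r)ᶜ v) ∧
            δ / 4 ≤ Metric.diam V) → V = U :=
  unique_big_component_large_measure_general hgeo hsphere ν hν δ hδ hball
end

section
/- Let (X,d) be a nonempty compact metric space. Let η : [0,T] → X be a unit-speed geodesic and let 0 ≤ s < t ≤ T be such that the restriction of η to [s,t] is the unique geodesic between its endpoints; that is, every unit-speed geodesic ξ : [0,t−s] → X with ξ(0) = η(s) and ξ(t−s) = η(t) satisfies ξ(u) = η(s+u) for all u ∈ [0,t−s]. Let (ξ_n) be any sequence of unit-speed geodesics ξ_n : [0,S_n] → X such that ξ_n(0) → η(s) and ξ_n(S_n) → η(t) as n → ∞. Then S_n → t−s, and the Hausdorff distance between ξ_n([0,S_n]) and η([s,t]) tends to 0 as n → ∞. -/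
/-!
Rescale each `ξ n` to the fixed interval `[0, t - s]`. The rescaled maps are uniformly Lipschitz
(their speeds `Sn n / (t - s)` tend to `1`), hence equicontinuous, so on the compact domain
pointwise convergence is already uniform convergence. Pointwise convergence holds because the
space of all maps `[0, t - s] → X` is compact and every cluster point of the sequence is a
unit-speed geodesic from `η s` to `η t`, hence equals `η (s + ·)` by uniqueness. Uniform
convergence of parametrizations bounds the Hausdorff distance of the images.
-/

open Filter Topology Set

theorem MapClusterPt.eq_of_tendsto_comp {ι X Y : Type*} [TopologicalSpace X]
    [TopologicalSpace Y] [T2Space Y] {l : Filter ι} {u : ι → X} {x : X} {φ : X → Y} {y : Y}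
    (hx : MapClusterPt x l u) (hφ : Continuous φ) (h : Tendsto (φ ∘ u) l (𝓝 y)) : φ x = y :=
  eq_of_nhds_neBot ((hx.continuousAt_comp hφ.continuousAt).clusterPt.mono h)

theorem tendsto_hausdorffEDist_range_of_tendstoUniformly {ι α X : Type*} [PseudoEMetricSpace X]
    {l : Filter ι} {F : ι → α → X} {f : α → X} (h : TendstoUniformly F f l) :
    Tendsto (fun i => Metric.hausdorffEDist (range (F i)) (range f)) l (𝓝 0) := by
  refine ENNReal.tendsto_nhds_zero.2 fun ε hε => ?_
  filter_upwards [EMetric.tendstoUniformly_iff.1 h ε hε] with i hi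
  refine Metric.hausdorffEDist_le_of_mem_edist ?_ ?_
  · rintro _ ⟨x, rfl⟩
    exact ⟨f x, mem_range_self x, by rw [edist_comm]; exact (hi x).le⟩
  · rintro _ ⟨x, rfl⟩
    exact ⟨F i x, mem_range_self x, (hi x).le⟩

noncomputable def rescaleIcc {X : Type*} (ξ : ℝ → X) (S L : ℝ) (u : Icc (0 : ℝ) L) : X :=
  ξ (S / L * u)

theorem range_rescaleIcc {X : Type*} {ξ : ℝ → X} {S L : ℝ} (hS : 0 ≤ S) (hL : 0 < L) :
    range (rescaleIcc ξ S L) = ξ '' Icc 0 S := by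
  unfold rescaleIcc
  rw [← image_eq_range (fun u => ξ (S / L * u)), ← image_image ξ (S / L * ·),
    image_mul_left_Icc (div_nonneg hS hL.le) hL.le, mul_zero, div_mul_cancel₀ S hL.ne']

theorem image_Icc_eq_range_const_add {X : Type*} (f : ℝ → X) (s t : ℝ) :
    f '' Icc s t = range fun u : Icc (0 : ℝ) (t - s) => f (s + u) := by
  rw [← image_eq_range (fun u => f (s + u)), ← image_image f (s + ·), image_const_add_Icc,
    add_zero, add_sub_cancel]

namespace IsUnitSpeedGeodesic

variable {X : Type*} [MetricSpace X]

theorem dist_eq_sub {η : ℝ → X} {T s t : ℝ} (hη : IsUnitSpeedGeodesic η T) (hs : 0 ≤ s)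
    (hst : s ≤ t) (ht : t ≤ T) : dist (η s) (η t) = t - s := by
  rw [hη s ⟨hs, hst.trans ht⟩ t ⟨hs.trans hst, ht⟩, abs_sub_comm,
    abs_of_nonneg (sub_nonneg.2 hst)]

theorem dist_rescaleIcc {ξ : ℝ → X} {S L : ℝ} (hξ : IsUnitSpeedGeodesic ξ S) (hS : 0 ≤ S)
    (hL : 0 < L) (u v : Icc (0 : ℝ) L) :
    dist (rescaleIcc ξ S L u) (rescaleIcc ξ S L v) = S / L * dist u v := by
  have hc : 0 ≤ S / L := div_nonneg hS hL.le
  have hmem : ∀ w : Icc (0 : ℝ) L, S / L * w ∈ Icc 0 S := fun w =>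
    ⟨mul_nonneg hc w.2.1, by simpa [div_mul_cancel₀ S hL.ne'] using
      mul_le_mul_of_nonneg_left w.2.2 hc⟩
  rw [rescaleIcc, rescaleIcc, hξ _ (hmem u) _ (hmem v), ← mul_sub, abs_mul, abs_of_nonneg hc,
    Subtype.dist_eq, Real.dist_eq]

end IsUnitSpeedGeodesic

section UniqueGeodesic

variable {X : Type*} [MetricSpace X]

theorem eq_of_mapClusterPt_rescaleIcc {γ : ℝ → X} {L : ℝ} (hL : 0 < L)
    (huniq : ∀ ζ : ℝ → X, IsUnitSpeedGeodesic ζ L → ζ 0 = γ 0 → ζ L = γ L →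
      ∀ u ∈ Icc 0 L, ζ u = γ u)
    {ι : Type*} {l : Filter ι} {ξ : ι → ℝ → X} {S : ι → ℝ} (hS : ∀ i, 0 ≤ S i)
    (hξ : ∀ i, IsUnitSpeedGeodesic (ξ i) (S i)) (hSL : Tendsto S l (𝓝 L))
    (h0 : Tendsto (fun i => ξ i 0) l (𝓝 (γ 0))) (h1 : Tendsto (fun i => ξ i (S i)) l (𝓝 (γ L)))
    {F : Icc (0 : ℝ) L → X} (hF : MapClusterPt F l fun i => rescaleIcc (ξ i) (S i) L) :
    F = fun u : Icc (0 : ℝ) L => γ u := by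
  have hdist (u v : Icc (0 : ℝ) L) : dist (F u) (F v) = dist u v := by
    refine hF.eq_of_tendsto_comp ((continuous_apply u).dist (continuous_apply v)) ?_
    have hlim := (hSL.div_const L).mul_const (dist u v)
    rw [div_self hL.ne', one_mul] at hlim
    exact hlim.congr fun i => ((hξ i).dist_rescaleIcc (hS i) hL u v).symm
  have heval (u : Icc (0 : ℝ) L) {x : X}
      (h : Tendsto (fun i => rescaleIcc (ξ i) (S i) L u) l (𝓝 x)) : F u = x :=
    hF.eq_of_tendsto_comp (continuous_apply u) h
  set ζ : ℝ → X := fun x => F (projIcc 0 L hL.le x)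
  have hζ : IsUnitSpeedGeodesic ζ L := fun x hx y hy => by
    simp [ζ, projIcc_of_mem _ hx, projIcc_of_mem _ hy, hdist, Subtype.dist_eq,
      Real.dist_eq]
  have hζ0 : ζ 0 = γ 0 := heval _ (by simpa [rescaleIcc] using h0)
  have hζL : ζ L = γ L := heval _ (by simpa [rescaleIcc, div_mul_cancel₀ _ hL.ne'] using h1)
  funext u
  simpa [ζ] using huniq ζ hζ hζ0 hζL u u.2

theorem tendstoUniformly_rescaleIcc_of_unique [CompactSpace X] {γ : ℝ → X} {L : ℝ}
    (hL : 0 < L)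
    (huniq : ∀ ζ : ℝ → X, IsUnitSpeedGeodesic ζ L → ζ 0 = γ 0 → ζ L = γ L →
      ∀ u ∈ Icc 0 L, ζ u = γ u)
    {ξ : ℕ → ℝ → X} {S : ℕ → ℝ} (hS : ∀ n, 0 ≤ S n)
    (hξ : ∀ n, IsUnitSpeedGeodesic (ξ n) (S n)) (hSL : Tendsto S atTop (𝓝 L))
    (h0 : Tendsto (fun n => ξ n 0) atTop (𝓝 (γ 0)))
    (h1 : Tendsto (fun n => ξ n (S n)) atTop (𝓝 (γ L))) :
    TendstoUniformly (fun n => rescaleIcc (ξ n) (S n) L) (fun u : Icc (0 : ℝ) L => γ u)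
      atTop := by
  obtain ⟨C, hC⟩ := hSL.bddAbove_range
  have hlip (n : ℕ) : LipschitzWith (C / L).toNNReal (rescaleIcc (ξ n) (S n) L) := by
    refine LipschitzWith.of_dist_le_mul fun u v => ?_
    have hSC : S n ≤ C := hC (mem_range_self n)
    rw [(hξ n).dist_rescaleIcc (hS n) hL,
      Real.coe_toNNReal _ (div_nonneg ((hS n).trans hSC) hL.le)]
    gcongr
  have hpt :
      Tendsto (fun n => rescaleIcc (ξ n) (S n) L) atTop (𝓝 fun u : Icc (0 : ℝ) L => γ u) :=
    tendsto_nhds_of_unique_mapClusterPt fun F hF =>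
      eq_of_mapClusterPt_rescaleIcc hL huniq hS hξ hSL h0 h1 hF
  exact UniformFun.tendsto_iff_tendstoUniformly.1
    (((LipschitzWith.uniformEquicontinuous _ _ hlip).equicontinuous.tendsto_uniformFun_iff_pi
      _ _).2 hpt)

end UniqueGeodesic

theorem geodesics_converge_to_unique_geodesic_general {X : Type*} [MetricSpace X]
    [CompactSpace X]
    (η : ℝ → X) (T s t : ℝ)
    (hη : IsUnitSpeedGeodesic η T) (hs : 0 ≤ s) (hst : s < t) (htT : t ≤ T)
    (huniq : ∀ ξ : ℝ → X, IsUnitSpeedGeodesic ξ (t - s) → ξ 0 = η s → ξ (t - s) = η t →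
      ∀ u ∈ Set.Icc (0 : ℝ) (t - s), ξ u = η (s + u))
    (ξ : ℕ → ℝ → X) (Sn : ℕ → ℝ) (hSn : ∀ n, 0 ≤ Sn n)
    (hξ : ∀ n, IsUnitSpeedGeodesic (ξ n) (Sn n))
    (h0 : Filter.Tendsto (fun n => ξ n 0) Filter.atTop (nhds (η s)))
    (h1 : Filter.Tendsto (fun n => ξ n (Sn n)) Filter.atTop (nhds (η t))) :
    Filter.Tendsto Sn Filter.atTop (nhds (t - s)) ∧
      Filter.Tendsto
        (fun n => EMetric.hausdorffEdist (ξ n '' Set.Icc 0 (Sn n)) (η '' Set.Icc s t))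
        Filter.atTop (nhds 0) := by
  have hL : 0 < t - s := sub_pos.2 hst
  have hSL : Tendsto Sn atTop (𝓝 (t - s)) := by
    rw [← hη.dist_eq_sub hs hst.le htT]
    exact (h0.dist h1).congr fun n =>
      ((hξ n).dist_eq_sub le_rfl (hSn n) le_rfl).trans (sub_zero _)
  refine ⟨hSL, ?_⟩
  have hunif := tendstoUniformly_rescaleIcc_of_unique (γ := fun u => η (s + u)) hL
    (by simpa using huniq) hSn hξ hSL (by simpa using h0) (by simpa using h1)
  have hHaus := tendsto_hausdorffEDist_range_of_tendstoUniformly hunif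
  simp only [range_rescaleIcc (hSn _) hL, ← image_Icc_eq_range_const_add] at hHaus
  exact hHaus

/-- In a nonempty compact metric space, if `η|_{[s,t]}` is the unique geodesic between its
endpoints, then any sequence of geodesics whose endpoints converge to `η(s)` and `η(t)`
converges to `η|_{[s,t]}`: lengths converge to `t - s` and images converge in the Hausdorff
distance. -/
theorem geodesics_converge_to_unique_geodesic {X : Type*} [MetricSpace X] [Nonempty X]
    [CompactSpace X]
    (η : ℝ → X) (T s t : ℝ) (hT : 0 ≤ T)
    (hη : IsUnitSpeedGeodesic η T) (hs : 0 ≤ s) (hst : s < t) (htT : t ≤ T)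
    (huniq : ∀ ξ : ℝ → X, IsUnitSpeedGeodesic ξ (t - s) → ξ 0 = η s → ξ (t - s) = η t →
      ∀ u ∈ Set.Icc (0 : ℝ) (t - s), ξ u = η (s + u))
    (ξ : ℕ → ℝ → X) (Sn : ℕ → ℝ) (hSn : ∀ n, 0 ≤ Sn n)
    (hξ : ∀ n, IsUnitSpeedGeodesic (ξ n) (Sn n))
    (h0 : Filter.Tendsto (fun n => ξ n 0) Filter.atTop (nhds (η s)))
    (h1 : Filter.Tendsto (fun n => ξ n (Sn n)) Filter.atTop (nhds (η t))) :
    Filter.Tendsto Sn Filter.atTop (nhds (t - s)) ∧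
      Filter.Tendsto
        (fun n => EMetric.hausdorffEdist (ξ n '' Set.Icc 0 (Sn n)) (η '' Set.Icc s t))
        Filter.atTop (nhds 0) :=
  geodesics_converge_to_unique_geodesic_general η T s t hη hs hst htT huniq ξ Sn hSn hξ h0 h1
end
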